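/- Let λ ∈ ℝ and define the sequence (x_n) by x_n = λ if n = 10^k for some k ∈ ℕ, x_n = −λ if n = 10^k + 1 for some k ∈ ℕ, and x_n = 0 otherwise. Then SR_st(Σ x_n) = λℤ = {λ m : m ∈ ℤ}. -/

import Mathlib

open Filter Topology

/-- A set `A ⊆ ℕ` is negligible if its natural density is zero. -/
def Negligible (A : Set ℕ) : Prop :=
  Tendsto (fun n : ℕ => ((A ∩ Set.Iio n).ncard : ℝ) / n) atTop (nhds 0)

/-- A sequence of reals statistically converges to `a`. -/
def StatTendsto (s : ℕ → ℝ) (a : ℝ) : Prop :=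
  ∀ ε : ℝ, ε > 0 → Negligible {n : ℕ | |s n - a| > ε}

/-- The statistical sum range of the series `Σ x_k`. -/
def SRst (x : ℕ → ℝ) : Set ℝ :=
  {s : ℝ | ∃ π : Equiv.Perm ℕ,
    StatTendsto (fun n : ℕ => ∑ k ∈ Finset.range n, x (π k)) s}

open Set

/-!
Every partial sum of a rearrangement lies in the discrete, hence closed, subgroup `λℤ`, and a
statistical limit is approached by the partial sums along a set of density one, so it lies in
`λℤ` too. Conversely, to reach `λM`, swap the `k`-th `-λ` term with the zero at index
`10^(k+M) + 2` for every `k`: for `10^L + 3 ≤ n < 10^(L+1)` the first `n` terms of the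
rearrangement then contain `L + 1` copies of `λ` and `L - M + 1` copies of `-λ`. The other `n`
lie below `10^M` or within `3` of a power of `10`; only `O(log n)` of them are below `n`, so they
form a set of density zero. Delaying the `λ` terms in the same way gives `-λM`.
-/

theorem negligible_of_ncard_le {A : Set ℕ} (g : ℕ → ℝ)
    (hg : Tendsto (fun n : ℕ => g n / n) atTop (𝓝 0))
    (h : ∀ n, ((A ∩ Iio n).ncard : ℝ) ≤ g n) : Negligible A :=
  squeeze_zero (fun n => by positivity)
    (fun n => div_le_div_of_nonneg_right (h n) n.cast_nonneg) hg

theorem Negligible.mono {A B : Set ℕ} (hB : Negligible B) (h : A ⊆ B) : Negligible A :=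
  negligible_of_ncard_le _ hB fun n => by
    gcongr
    exact (finite_Iio n).inter_of_right B

theorem Negligible.union {A B : Set ℕ} (hA : Negligible A) (hB : Negligible B) :
    Negligible (A ∪ B) := by
  refine negligible_of_ncard_le (fun n => ((A ∩ Iio n).ncard + (B ∩ Iio n).ncard : ℝ))
    (by simpa [add_div] using hA.add hB) fun n => ?_
  rw [union_inter_distrib_right]
  exact_mod_cast ncard_union_le _ _

theorem Set.Finite.negligible {A : Set ℕ} (hA : A.Finite) : Negligible A :=
  negligible_of_ncard_le (fun _ => A.ncard) (tendsto_const_div_atTop_nhds_zero_nat _) fun n => by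
    exact_mod_cast ncard_le_ncard inter_subset_left hA

theorem not_negligible_univ : ¬ Negligible univ := by
  intro h
  have h1 : (fun n : ℕ => ((univ ∩ Iio n).ncard : ℝ) / n) =ᶠ[atTop] fun _ => 1 := by
    filter_upwards [eventually_ne_atTop 0] with n hn
    simp [hn]
  exact one_ne_zero (tendsto_nhds_unique (tendsto_const_nhds.congr' h1.symm) h)

theorem tendsto_natLog_div_atTop (b : ℕ) :
    Tendsto (fun n : ℕ => (Nat.log b n : ℝ) / n) atTop (𝓝 0) := by
  have hlogb : Tendsto (fun n : ℕ => Real.logb b n / n) atTop (𝓝 0) := by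
    have := (Real.isLittleO_log_id_atTop.tendsto_div_nhds_zero.comp
      tendsto_natCast_atTop_atTop).div_const (Real.log b)
    simpa [Real.logb, div_right_comm] using this
  exact squeeze_zero (fun n => by positivity)
    (fun n => div_le_div_of_nonneg_right (Real.natLog_le_logb n b) n.cast_nonneg) hlogb

def nearPowers (b w : ℕ) : Set ℕ := {n | ∃ k, b ^ k ≤ n ∧ n < b ^ k + w}

theorem ncard_nearPowers_inter_Iio_le {b : ℕ} (hb : 1 < b) (w n : ℕ) :
    (nearPowers b w ∩ Iio n).ncard ≤ w * (Nat.log b n + 1) := by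
  have hsub : nearPowers b w ∩ Iio n ⊆
      (fun p : ℕ × ℕ => b ^ p.1 + p.2) '' (Iic (Nat.log b n) ×ˢ Iio w) := by
    rintro i ⟨⟨k, hki, hik⟩, hin⟩
    rw [mem_Iio] at hin
    refine ⟨(k, i - b ^ k), ⟨Nat.le_log_of_pow_le hb (show b ^ k ≤ n by omega), ?_⟩, ?_⟩ <;>
      simp only [mem_Iio] <;> omega
  calc (nearPowers b w ∩ Iio n).ncard
      ≤ ((fun p : ℕ × ℕ => b ^ p.1 + p.2) '' (Iic (Nat.log b n) ×ˢ Iio w)).ncard :=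
        ncard_le_ncard hsub (((finite_Iic _).prod (finite_Iio _)).image _)
    _ ≤ (Iic (Nat.log b n) ×ˢ Iio w).ncard := ncard_image_le ((finite_Iic _).prod (finite_Iio _))
    _ = w * (Nat.log b n + 1) := by rw [ncard_prod, ncard_Iic_nat, ncard_Iio_nat, mul_comm]

theorem negligible_nearPowers {b : ℕ} (hb : 1 < b) (w : ℕ) : Negligible (nearPowers b w) := by
  refine negligible_of_ncard_le (fun n => w * (Nat.log b n + 1)) ?_ fun n => by
    exact_mod_cast ncard_nearPowers_inter_Iio_le hb w n
  have := ((tendsto_natLog_div_atTop b).const_mul (w : ℝ)).add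
    (tendsto_const_div_atTop_nhds_zero_nat (w : ℝ))
  simpa [mul_add, add_div, mul_div_assoc] using this

theorem StatTendsto.mem_of_isClosed {s : ℕ → ℝ} {a : ℝ} {S : Set ℝ} (h : StatTendsto s a)
    (hS : IsClosed S) (hs : ∀ n, s n ∈ S) : a ∈ S := by
  rw [← hS.closure_eq, Metric.mem_closure_iff]
  intro ε hε
  obtain ⟨n, hn⟩ : ∃ n, ¬ |s n - a| > ε / 2 := by
    by_contra! hall
    have : {n | |s n - a| > ε / 2} = univ := eq_univ_of_forall hall
    exact not_negligible_univ (this ▸ h (ε / 2) (by positivity))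
  refine ⟨s n, hs n, ?_⟩
  rw [Real.dist_eq, abs_sub_comm]
  linarith

theorem Negligible.statTendsto_of_eq {s : ℕ → ℝ} {a : ℝ} {S : Set ℕ} (hS : Negligible S)
    (h : ∀ n ∉ S, s n = a) : StatTendsto s a := fun ε hε =>
  hS.mono fun n hn => by_contra fun hnS => by simp [h n hnS, hε.not_gt] at hn

namespace Function

variable {ι α : Type*} {f g : ι → α}

open Classical in
noncomputable def rangeSwap (f g : ι → α) (a : α) : α :=
  if h : ∃ k, f k = a then g h.choose else if h : ∃ k, g k = a then f h.choose else a

theorem rangeSwap_apply_left (hf : Injective f) (k : ι) : rangeSwap f g (f k) = g k := by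
  have h : ∃ j, f j = f k := ⟨k, rfl⟩
  rw [rangeSwap, dif_pos h, hf h.choose_spec]

theorem rangeSwap_apply_right (hg : Injective g) (hfg : Disjoint (range f) (range g)) (k : ι) :
    rangeSwap f g (g k) = f k := by
  have h : ∃ j, g j = g k := ⟨k, rfl⟩
  have hf : ¬∃ j, f j = g k := fun ⟨j, hj⟩ =>
    hfg.ne_of_mem (mem_range_self j) (mem_range_self k) hj
  rw [rangeSwap, dif_neg hf, dif_pos h, hg h.choose_spec]

theorem rangeSwap_apply_of_notMem {a : α} (haf : a ∉ range f) (hag : a ∉ range g) :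
    rangeSwap f g a = a := by
  rw [rangeSwap, dif_neg (show ¬∃ k, f k = a from haf), dif_neg (show ¬∃ k, g k = a from hag)]

variable (hf : Injective f) (hg : Injective g) (hfg : Disjoint (range f) (range g))
include hf hg hfg

theorem rangeSwap_involutive : Involutive (rangeSwap f g) := by
  intro a
  by_cases haf : a ∈ range f
  · obtain ⟨k, rfl⟩ := haf
    rw [rangeSwap_apply_left hf, rangeSwap_apply_right hg hfg]
  by_cases hag : a ∈ range g
  · obtain ⟨k, rfl⟩ := hag
    rw [rangeSwap_apply_right hg hfg, rangeSwap_apply_left hf]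
  rw [rangeSwap_apply_of_notMem haf hag, rangeSwap_apply_of_notMem haf hag]

theorem rangeSwap_preimage_range_left : rangeSwap f g ⁻¹' range f = range g := by
  ext a
  constructor
  · rintro ⟨k, hk⟩
    exact ⟨k, by rw [← rangeSwap_involutive hf hg hfg a, ← hk, rangeSwap_apply_left hf]⟩
  · rintro ⟨k, rfl⟩
    exact ⟨k, (rangeSwap_apply_right hg hfg k).symm⟩

theorem rangeSwap_preimage_of_disjoint {S : Set α} (hSf : Disjoint S (range f))
    (hSg : Disjoint S (range g)) : rangeSwap f g ⁻¹' S = S := by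
  ext a
  by_cases haf : a ∈ range f
  · obtain ⟨k, rfl⟩ := haf
    simp only [mem_preimage, rangeSwap_apply_left hf]
    exact iff_of_false (hSg.notMem_of_mem_right (mem_range_self k))
      (hSf.notMem_of_mem_right (mem_range_self k))
  by_cases hag : a ∈ range g
  · obtain ⟨k, rfl⟩ := hag
    simp only [mem_preimage, rangeSwap_apply_right hg hfg]
    exact iff_of_false (hSf.notMem_of_mem_right (mem_range_self k))
      (hSg.notMem_of_mem_right (mem_range_self k))
  rw [mem_preimage, rangeSwap_apply_of_notMem haf hag]

end Function

theorem Nat.pow_ne_pow_add {b c : ℕ} (hc : 0 < c) (hcb : c < b - 1) (i j : ℕ) :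
    b ^ j ≠ b ^ i + c := by
  have hb : 1 ≤ b := by omega
  rcases le_or_gt j i with hji | hij
  · have := Nat.pow_le_pow_right hb hji
    omega
  · have h1 : b ^ (i + 1) ≤ b ^ j := Nat.pow_le_pow_right hb hij
    have h2 : 1 ≤ b ^ i := Nat.one_le_pow _ _ hb
    rw [pow_succ] at h1
    have h3 : b ^ i + (b - 1) ≤ b ^ i * b := by
      obtain ⟨d, rfl⟩ := Nat.exists_eq_add_of_le hb
      simp only [Nat.add_sub_cancel_left, mul_add, mul_one]
      nlinarith
    omega

theorem Nat.pow_add_le_iff_le {b L n c w : ℕ} (hb : 0 < b) (hL : b ^ L + w ≤ n)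
    (hn : n < b ^ (L + 1)) (hc : c ≤ w) (k : ℕ) : b ^ k + c ≤ n ↔ k ≤ L := by
  constructor
  · intro hk
    by_contra! hLk
    have := Nat.pow_le_pow_right hb (show L + 1 ≤ k by omega)
    omega
  · intro hk
    have := Nat.pow_le_pow_right hb hk
    omega

theorem ncard_range_inter_Iio {f : ℕ → ℕ} (hf : f.Injective) {n m : ℕ}
    (h : ∀ k, f k < n ↔ k ≤ m) : (range f ∩ Iio n).ncard = m + 1 := by
  have : range f ∩ Iio n = f '' Iic m := by
    ext a
    simp only [mem_inter_iff, mem_range, mem_Iio, mem_image, mem_Iic, ← h]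
    constructor
    · rintro ⟨⟨k, rfl⟩, hk⟩; exact ⟨k, hk, rfl⟩
    · rintro ⟨k, hk, rfl⟩; exact ⟨⟨k, rfl⟩, hk⟩
  rw [this, ncard_image_of_injective _ hf, ncard_Iic_nat]

theorem sum_range_comp_eq_of_eqOn {lam : ℝ} {x : ℕ → ℝ} {P N : Set ℕ} (hPN : Disjoint P N)
    (hP : ∀ i ∈ P, x i = lam) (hN : ∀ i ∈ N, x i = -lam) (h0 : ∀ i, i ∉ P → i ∉ N → x i = 0)
    (σ : ℕ → ℕ) (n : ℕ) :
    ∑ i ∈ Finset.range n, x (σ i)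
      = lam * (σ ⁻¹' P ∩ Iio n).ncard - lam * (σ ⁻¹' N ∩ Iio n).ncard := by
  classical
  have hx : ∀ i, x (σ i)
      = lam * (if i ∈ σ ⁻¹' P then 1 else 0) - lam * (if i ∈ σ ⁻¹' N then 1 else 0) := by
    intro i
    simp only [mem_preimage]
    by_cases hiP : σ i ∈ P
    · simp [hiP, hPN.notMem_of_mem_left hiP, hP _ hiP]
    by_cases hiN : σ i ∈ N
    · simp [hiP, hiN, hN _ hiN]
    · simp [hiP, hiN, h0 _ hiP hiN]
  have hcard : ∀ S : Set ℕ, (S ∩ Iio n).ncard = ((Finset.range n).filter (· ∈ S)).card := by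
    intro S
    rw [← ncard_coe_finset]
    congr 1
    ext i
    simp [and_comm]
  simp only [hx, Finset.sum_sub_distrib, ← Finset.mul_sum, Finset.sum_boole, hcard]

theorem SRst_subset_of_forall_mem {x : ℕ → ℝ} {G : AddSubgroup ℝ} [DiscreteTopology G]
    (hx : ∀ i, x i ∈ G) : SRst x ⊆ G := fun _ ⟨_, hπ⟩ =>
  hπ.mem_of_isClosed G.isClosed_of_discrete fun _ => G.sum_mem fun _ _ => hx _

theorem statTendsto_of_eq_away_from_powers {b w : ℕ} (hb : 1 < b) {s : ℕ → ℝ} {a : ℝ} (M : ℕ)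
    (h : ∀ L n, M ≤ L → b ^ L + w ≤ n → n < b ^ (L + 1) → s n = a) : StatTendsto s a := by
  refine ((finite_Iio (b ^ M)).negligible.union (negligible_nearPowers hb w)).statTendsto_of_eq
    fun n hn => ?_
  simp only [mem_union, mem_Iio, not_or, not_lt] at hn
  obtain ⟨hMn, hnear⟩ := hn
  have hn0 : n ≠ 0 := by
    have := Nat.one_le_pow M b (by omega)
    omega
  refine h (Nat.log b n) n (Nat.le_log_of_pow_le hb hMn) ?_ (Nat.lt_pow_succ_log_self hb n)
  by_contra! hlt
  exact hnear ⟨_, Nat.pow_log_le_self b hn0, hlt⟩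

section TenPowers

theorem injective_ten_pow : Function.Injective fun k : ℕ => 10 ^ k :=
  Nat.pow_right_injective (by norm_num)

theorem injective_ten_pow_sub_one : Function.Injective fun k : ℕ => 10 ^ k - 1 := by
  intro i j h
  have := Nat.one_le_pow i 10 (by norm_num)
  have := Nat.one_le_pow j 10 (by norm_num)
  exact injective_ten_pow (show 10 ^ i = 10 ^ j by simp only at h; omega)

theorem injective_ten_pow_add_two (M : ℕ) : Function.Injective fun k : ℕ => 10 ^ (k + M) + 2 :=
  fun i j h => by simpa using injective_ten_pow (add_right_cancel h)

theorem disjoint_range_ten_pow_sub_one_ten_pow :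
    Disjoint (range fun k : ℕ => 10 ^ k - 1) (range fun k : ℕ => 10 ^ k) := by
  refine disjoint_range_iff.2 fun i j h =>
    Nat.pow_ne_pow_add (b := 10) (c := 1) (by norm_num) (by norm_num) j i ?_
  have := Nat.one_le_pow i 10 (by norm_num)
  omega

theorem disjoint_range_ten_pow_sub_one_add_two (M : ℕ) :
    Disjoint (range fun k : ℕ => 10 ^ k - 1) (range fun k : ℕ => 10 ^ (k + M) + 2) := by
  refine disjoint_range_iff.2 fun i j h =>
    Nat.pow_ne_pow_add (b := 10) (c := 3) (by norm_num) (by norm_num) (j + M) i ?_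
  have := Nat.one_le_pow i 10 (by norm_num)
  omega

theorem disjoint_range_ten_pow_add_two (M : ℕ) :
    Disjoint (range fun k : ℕ => 10 ^ k) (range fun k : ℕ => 10 ^ (k + M) + 2) :=
  disjoint_range_iff.2 fun i j =>
    Nat.pow_ne_pow_add (b := 10) (by norm_num) (by norm_num) (j + M) i

variable {L n : ℕ} (hL : 10 ^ L + 3 ≤ n) (hn : n < 10 ^ (L + 1))
include hL hn

theorem ncard_range_ten_pow_sub_one_inter_Iio :
    ((range fun k : ℕ => 10 ^ k - 1) ∩ Iio n).ncard = L + 1 :=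
  ncard_range_inter_Iio injective_ten_pow_sub_one fun k => by
    have := Nat.one_le_pow k 10 (by norm_num)
    have := Nat.pow_add_le_iff_le (c := 0) (by norm_num) hL hn (by norm_num) k
    omega

theorem ncard_range_ten_pow_inter_Iio :
    ((range fun k : ℕ => 10 ^ k) ∩ Iio n).ncard = L + 1 :=
  ncard_range_inter_Iio injective_ten_pow fun k => by
    have := Nat.pow_add_le_iff_le (c := 1) (by norm_num) hL hn (by norm_num) k
    omega

theorem ncard_range_ten_pow_add_two_inter_Iio {M : ℕ} (hM : M ≤ L) :
    ((range fun k : ℕ => 10 ^ (k + M) + 2) ∩ Iio n).ncard = L - M + 1 :=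
  ncard_range_inter_Iio (injective_ten_pow_add_two M) fun k => by
    have := Nat.pow_add_le_iff_le (c := 3) (by norm_num) hL hn (by norm_num) (k + M)
    omega

end TenPowers

section SumRange

-- `x i` is the paper's `x_{i+1}`: `λ` sits at the indices `10^k - 1` and `-λ` at `10^k`.
variable {lam : ℝ} {x : ℕ → ℝ}
  (hP : ∀ i ∈ range fun k : ℕ => 10 ^ k - 1, x i = lam)
  (hN : ∀ i ∈ range fun k : ℕ => 10 ^ k, x i = -lam)
  (h0 : ∀ i, i ∉ range (fun k : ℕ => 10 ^ k - 1) → i ∉ range (fun k : ℕ => 10 ^ k) →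
    x i = 0)
include hP hN h0

theorem mem_zmultiples_of_eqOn (i : ℕ) : x i ∈ AddSubgroup.zmultiples lam := by
  by_cases hiP : i ∈ range fun k : ℕ => 10 ^ k - 1
  · exact hP i hiP ▸ AddSubgroup.mem_zmultiples lam
  by_cases hiN : i ∈ range fun k : ℕ => 10 ^ k
  · exact hN i hiN ▸ neg_mem (AddSubgroup.mem_zmultiples lam)
  · exact h0 i hiP hiN ▸ zero_mem _

theorem mul_natCast_mem_SRst (M : ℕ) : lam * M ∈ SRst x := by
  have hf := injective_ten_pow
  have hg := injective_ten_pow_add_two M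
  have hfg := disjoint_range_ten_pow_add_two M
  refine ⟨(Function.rangeSwap_involutive hf hg hfg).toPerm _,
    statTendsto_of_eq_away_from_powers (b := 10) (w := 3) (by norm_num) M
      fun L n hM hL hn => ?_⟩
  rw [Function.Involutive.coe_toPerm,
    sum_range_comp_eq_of_eqOn disjoint_range_ten_pow_sub_one_ten_pow hP hN h0,
    Function.rangeSwap_preimage_of_disjoint hf hg hfg disjoint_range_ten_pow_sub_one_ten_pow
      (disjoint_range_ten_pow_sub_one_add_two M),
    Function.rangeSwap_preimage_range_left hf hg hfg,
    ncard_range_ten_pow_sub_one_inter_Iio hL hn, ncard_range_ten_pow_add_two_inter_Iio hL hn hM]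
  push_cast [Nat.cast_sub hM]
  ring

theorem neg_mul_natCast_mem_SRst (M : ℕ) : -(lam * M) ∈ SRst x := by
  have hf := injective_ten_pow_sub_one
  have hg := injective_ten_pow_add_two M
  have hfg := disjoint_range_ten_pow_sub_one_add_two M
  refine ⟨(Function.rangeSwap_involutive hf hg hfg).toPerm _,
    statTendsto_of_eq_away_from_powers (b := 10) (w := 3) (by norm_num) M
      fun L n hM hL hn => ?_⟩
  rw [Function.Involutive.coe_toPerm,
    sum_range_comp_eq_of_eqOn disjoint_range_ten_pow_sub_one_ten_pow hP hN h0,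
    Function.rangeSwap_preimage_range_left hf hg hfg,
    Function.rangeSwap_preimage_of_disjoint hf hg hfg
      disjoint_range_ten_pow_sub_one_ten_pow.symm (disjoint_range_ten_pow_add_two M),
    ncard_range_ten_pow_inter_Iio hL hn, ncard_range_ten_pow_add_two_inter_Iio hL hn hM]
  push_cast [Nat.cast_sub hM]
  ring

end SumRange

/-- Here `x i` denotes the `(i+1)`-st term of the series, i.e. the sequence is
`x_1, x_2, …` with `x_n = λ` for `n = 10^k`, `x_n = -λ` for `n = 10^k + 1`,
and `x_n = 0` otherwise. -/
theorem stat_sum_range_example_lambdaZ (lam : ℝ) (x : ℕ → ℝ)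
    (hpos : ∀ n : ℕ, (∃ k : ℕ, n + 1 = 10 ^ k) → x n = lam)
    (hneg : ∀ n : ℕ, (∃ k : ℕ, n + 1 = 10 ^ k + 1) → x n = -lam)
    (hzero : ∀ n : ℕ, ¬(∃ k : ℕ, n + 1 = 10 ^ k) → ¬(∃ k : ℕ, n + 1 = 10 ^ k + 1) →
      x n = 0) :
    SRst x = {y : ℝ | ∃ m : ℤ, y = lam * m} := by
  have hP : ∀ i ∈ range fun k : ℕ => 10 ^ k - 1, x i = lam := by
    rintro _ ⟨k, rfl⟩
    exact hpos _ ⟨k, Nat.sub_add_cancel (Nat.one_le_pow k 10 (by norm_num))⟩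
  have hN : ∀ i ∈ range fun k : ℕ => 10 ^ k, x i = -lam := by
    rintro _ ⟨k, rfl⟩
    exact hneg _ ⟨k, rfl⟩
  have h0 : ∀ i, i ∉ range (fun k : ℕ => 10 ^ k - 1) → i ∉ range (fun k : ℕ => 10 ^ k) →
      x i = 0 := fun i hiP hiN =>
    hzero i (fun ⟨k, hk⟩ => hiP ⟨k, show 10 ^ k - 1 = i by omega⟩)
      (fun ⟨k, hk⟩ => hiN ⟨k, show 10 ^ k = i by omega⟩)
  have hG : {y : ℝ | ∃ m : ℤ, y = lam * m} = AddSubgroup.zmultiples lam := by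
    ext y
    simp [AddSubgroup.mem_zmultiples_iff, eq_comm, mul_comm]
  rw [hG]
  refine (SRst_subset_of_forall_mem (mem_zmultiples_of_eqOn hP hN h0)).antisymm fun y hy => ?_
  obtain ⟨m, rfl⟩ := AddSubgroup.mem_zmultiples_iff.1 hy
  obtain ⟨M, rfl | rfl⟩ := Int.eq_nat_or_neg m
  · simpa [mul_comm] using mul_natCast_mem_SRst hP hN h0 M
  · simpa [mul_comm] using neg_mul_natCast_mem_SRst hP hN h0 M
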